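/- Let A ⊇ B ⊇ C be a left relative H-separable tower with D = A^C and R = A^B. Then the map B ⊗_C A → Hom(_R D, _R A) sending b ⊗ a to (d ↦ b d a) is an isomorphism of B-A-bimodules. -/

import Mathlib

/-! Left relative H-separability provides `B`-central `eₖ ∈ B ⊗_C A` and `dₖ ∈ D = A^C`
with `1 ⊗ 1 = ∑ₖ eₖ dₖ`. Then `x = ∑ₖ eₖ Φ(x)(dₖ)` for every `x`, so `Φ` is injective; and
since `Φ(eₖ)(d) ∈ R` and `d = ∑ₖ Φ(eₖ)(d) dₖ`, a left `R`-linear `g` is the image of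
`∑ₖ eₖ g(dₖ)`. -/

open scoped TensorProduct

noncomputable section
namespace NCT

variable {C L R : Type*} [Ring C] [Ring L] [Ring R]

def rel (f : C →+* L) (g : C →+* R) : Submodule ℤ (L ⊗[ℤ] R) :=
  Submodule.span ℤ
    {x | ∃ (l : L) (c : C) (r : R), x = (l * f c) ⊗ₜ[ℤ] r - l ⊗ₜ[ℤ] (g c * r)}

/-- The relative tensor product `L ⊗_C R`, with `C` acting on `L` on the right through `f`
and on `R` on the left through `g`. -/
def Tens (f : C →+* L) (g : C →+* R) : Type _ := (L ⊗[ℤ] R) ⧸ rel f g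

instance (f : C →+* L) (g : C →+* R) : AddCommGroup (Tens f g) :=
  inferInstanceAs (AddCommGroup ((L ⊗[ℤ] R) ⧸ rel f g))

variable (f : C →+* L) (g : C →+* R)

def tmul (l : L) (r : R) : Tens f g := Submodule.Quotient.mk (l ⊗ₜ[ℤ] r)

lemma tmul_rel (l : L) (c : C) (r : R) :
    tmul f g (l * f c) r = tmul f g l (g c * r) := by
  refine (Submodule.Quotient.eq _).2 ?_
  exact Submodule.subset_span ⟨l, c, r, rfl⟩

lemma tmul_add_left (l l' : L) (r : R) :
    tmul f g (l + l') r = tmul f g l r + tmul f g l' r := by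
  show Submodule.Quotient.mk _ = _
  rw [TensorProduct.add_tmul, Submodule.Quotient.mk_add]; rfl

lemma tmul_add_right (l : L) (r r' : R) :
    tmul f g l (r + r') = tmul f g l r + tmul f g l r' := by
  show Submodule.Quotient.mk _ = _
  rw [TensorProduct.tmul_add, Submodule.Quotient.mk_add]; rfl

def mkBilin {M N P : Type*} [AddCommGroup M] [AddCommGroup N] [AddCommGroup P]
    (φ : M → N → P)
    (h1 : ∀ m m' n, φ (m + m') n = φ m n + φ m' n)
    (h2 : ∀ m n n', φ m (n + n') = φ m n + φ m n') : M →+ N →+ P :=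
  AddMonoidHom.mk' (fun m => AddMonoidHom.mk' (φ m) (h2 m))
    (fun m m' => by ext n; exact h1 m m' n)

@[simp] lemma mkBilin_apply {M N P : Type*} [AddCommGroup M] [AddCommGroup N] [AddCommGroup P]
    (φ : M → N → P) (h1 h2) (m : M) (n : N) : mkBilin φ h1 h2 m n = φ m n := rfl

def lift {P : Type*} [AddCommGroup P] (φ : L →+ R →+ P)
    (hbal : ∀ l c r, φ (l * f c) r = φ l (g c * r)) : Tens f g →+ P :=
  (Submodule.liftQ (rel f g)
    (TensorProduct.liftAddHom φ (by
      intro n l r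
      simp only [AddMonoidHom.map_zsmul, AddMonoidHom.smul_apply]) ).toIntLinearMap
    (by
      rw [rel, Submodule.span_le]
      rintro x ⟨l, c, r, rfl⟩
      simp only [SetLike.mem_coe, LinearMap.mem_ker, AddMonoidHom.coe_toIntLinearMap,
        map_sub, TensorProduct.liftAddHom_tmul]
      rw [hbal, sub_self])).toAddMonoidHom

@[simp] lemma lift_tmul {P : Type*} [AddCommGroup P] (φ : L →+ R →+ P)
    (hbal : ∀ l c r, φ (l * f c) r = φ l (g c * r)) (l : L) (r : R) :
    lift f g φ hbal (tmul f g l r) = φ l r := rfl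

def lact (l : L) : Tens f g →+ Tens f g :=
  lift f g (mkBilin (fun l' r => tmul f g (l * l') r)
      (fun a b r => by rw [mul_add, tmul_add_left])
      (fun a r s => by rw [tmul_add_right]))
    (fun l' c r => by simp only [mkBilin_apply]; rw [← mul_assoc, tmul_rel])

@[simp] lemma lact_tmul (l l' : L) (r : R) :
    lact f g l (tmul f g l' r) = tmul f g (l * l') r := rfl

def ract (r : R) : Tens f g →+ Tens f g :=
  lift f g (mkBilin (fun l' r' => tmul f g l' (r' * r))
      (fun a b r' => by rw [tmul_add_left])
      (fun a r' s => by rw [add_mul, tmul_add_right]))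
    (fun l' c r' => by simp only [mkBilin_apply]; rw [tmul_rel, mul_assoc])

@[simp] lemma ract_tmul (r r' : R) (l : L) :
    ract f g r (tmul f g l r') = tmul f g l (r' * r) := rfl

def mapLeft {L' : Type*} [Ring L'] (h : L →+* L') :
    Tens f g →+ Tens (h.comp f) g :=
  lift f g (mkBilin (fun l r => tmul (h.comp f) g (h l) r)
      (fun a b r => by rw [map_add, tmul_add_left])
      (fun a r s => by rw [tmul_add_right]))
    (fun l c r => by
      simp only [mkBilin_apply, map_mul]
      exact tmul_rel (h.comp f) g (h l) c r)

@[simp] lemma mapLeft_tmul {L' : Type*} [Ring L'] (h : L →+* L') (l : L) (r : R) :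
    mapLeft f g h (tmul f g l r) = tmul (h.comp f) g (h l) r := rfl

def mulMap (jl : L →+* R) (hcomp : ∀ c, jl (f c) = g c) : Tens f g →+ R :=
  lift f g (mkBilin (fun l r => jl l * r)
      (fun a b r => by rw [map_add, add_mul])
      (fun a r s => by rw [mul_add]))
    (fun l c r => by simp only [mkBilin_apply]; rw [map_mul, hcomp, mul_assoc])

@[simp] lemma mulMap_tmul (jl : L →+* R) (hcomp : ∀ c, jl (f c) = g c) (l : L) (r : R) :
    mulMap f g jl hcomp (tmul f g l r) = jl l * r := rfl

lemma tens_induction {p : Tens f g → Prop} (zero : p 0)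
    (tm : ∀ l r, p (tmul f g l r)) (add : ∀ x y, p x → p y → p (x + y)) :
    ∀ x, p x := by
  intro x
  obtain ⟨y, rfl⟩ := Submodule.Quotient.mk_surjective _ x
  induction y using TensorProduct.induction_on with
  | zero => exact zero
  | tmul l r => exact tm l r
  | add a b ha hb =>
      rw [Submodule.Quotient.mk_add]
      exact add _ _ ha hb

end NCT
end

noncomputable section
open NCT

/-- The tower `A ⊇ B ⊇ C` (given by ring maps `ι : C → B`, `j : B → A`) is
*left relative H-separable*: `B ⊗_C A ⊕ * ≅ A^n` as `B`-`A`-bimodules. -/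
def LeftRelHSep {C B A : Type*} [Ring C] [Ring B] [Ring A]
    (ι : C →+* B) (j : B →+* A) (n : ℕ) : Prop :=
  ∃ (i : Tens ι (j.comp ι) →+ (Fin n → A)) (p : (Fin n → A) →+ Tens ι (j.comp ι)),
    (∀ (b : B) x, i (lact ι (j.comp ι) b x) = fun k => j b * i x k) ∧
    (∀ (a : A) x, i (ract ι (j.comp ι) a x) = fun k => i x k * a) ∧
    (∀ (b : B) v, p (fun k => j b * v k) = lact ι (j.comp ι) b (p v)) ∧
    (∀ (a : A) v, p (fun k => v k * a) = ract ι (j.comp ι) a (p v)) ∧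
    ∀ x, p (i x) = x

/-- `B` is a *left relative separable extension of `C` in `A`*: the multiplication map
`μ : B ⊗_C A → A` splits as a `B`-`A`-bimodule epimorphism. -/
def LeftRelSep {C B A : Type*} [Ring C] [Ring B] [Ring A]
    (ι : C →+* B) (j : B →+* A) : Prop :=
  ∃ σ : A →+ Tens ι (j.comp ι),
    (∀ (b : B) (a : A), σ (j b * a) = lact ι (j.comp ι) b (σ a)) ∧
    (∀ (a a' : A), σ (a * a') = ract ι (j.comp ι) a' (σ a)) ∧
    ∀ a, mulMap ι (j.comp ι) j (fun _ => rfl) (σ a) = a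

/-- `B ⊇ C` is a separable extension: there is a `B`-central element
`e ∈ B ⊗_C B` with `μ(e) = 1`. -/
def IsSepExt {C B : Type*} [Ring C] [Ring B] (ι : C →+* B) : Prop :=
  ∃ e : Tens ι ι, (∀ b : B, lact ι ι b e = ract ι ι b e) ∧
    mulMap ι ι (RingHom.id B) (fun _ => rfl) e = 1

/-- The `B`-`A`-bimodule map `B ⊗_C A → Hom(_R D, _R A)`, `b ⊗ a ↦ (d ↦ b d a)`,
where `D = A^C`. -/
def Phi {C B A : Type*} [Ring C] [Ring B] [Ring A] (ι : C →+* B) (j : B →+* A) :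
    Tens ι (j.comp ι) →+ (↥(Subring.centralizer (Set.range (j.comp ι))) →+ A) :=
  lift ι (j.comp ι)
    (mkBilin (fun b a => AddMonoidHom.mk'
        (fun d : ↥(Subring.centralizer (Set.range (j.comp ι))) => j b * (d : A) * a)
        (fun x y => by
          push_cast
          rw [mul_add, add_mul]))
      (fun b b' a => by ext d; simp only [AddMonoidHom.mk'_apply, map_add]; rw [add_mul, add_mul]; rfl
      )
      (fun b a a' => by ext d; simp only [AddMonoidHom.mk'_apply]; rw [mul_add]; rfl))
    (fun b c a => by
      ext d
      have hd := d.2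
      rw [Subring.mem_centralizer_iff] at hd
      have hcd : j (ι c) * (d : A) = (d : A) * j (ι c) := hd _ ⟨c, rfl⟩
      simp only [mkBilin_apply, AddMonoidHom.mk'_apply, map_mul]
      rw [show ((j.comp ι) c : A) = j (ι c) from rfl, mul_assoc (j b) (j (ι c)) (d : A),
        hcd, ← mul_assoc, mul_assoc (j b * (d : A))])

namespace NCT

variable {C L R : Type*} [Ring C] [Ring L] [Ring R] (f : C →+* L) (g : C →+* R)

lemma ract_add (r r' : R) (x : Tens f g) :
    ract f g (r + r') x = ract f g r x + ract f g r' x := by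
  induction x using tens_induction with
  | zero => simp only [map_zero, add_zero]
  | tm l s => simp only [ract_tmul, mul_add, tmul_add_right]
  | add x y hx hy => rw [map_add, hx, hy, map_add, map_add, add_add_add_comm]

lemma ract_zero (x : Tens f g) : ract f g 0 x = 0 := by
  simpa only [add_zero, left_eq_add] using ract_add f g 0 0 x

lemma ract_ract (r r' : R) (x : Tens f g) :
    ract f g r (ract f g r' x) = ract f g (r' * r) x := by
  induction x using tens_induction with
  | zero => simp only [map_zero]
  | tm l s => simp only [ract_tmul, mul_assoc]
  | add x y hx hy => rw [map_add, map_add, hx, hy, map_add]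

lemma lact_ract (l : L) (r : R) (x : Tens f g) :
    lact f g l (ract f g r x) = ract f g r (lact f g l x) := by
  induction x using tens_induction with
  | zero => simp only [map_zero]
  | tm l' s => rfl
  | add x y hx hy => rw [map_add, map_add, hx, hy, map_add, map_add]

end NCT

section Phi

variable {C B A : Type*} [Ring C] [Ring B] [Ring A] (ι : C →+* B) (j : B →+* A)

lemma Phi_tmul (b : B) (a : A) (d : Subring.centralizer (Set.range (j.comp ι))) :
    Phi ι j (tmul ι (j.comp ι) b a) d = j b * d * a := rfl

lemma Phi_lact (b : B) (x : Tens ι (j.comp ι)) (d : Subring.centralizer (Set.range (j.comp ι))) :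
    Phi ι j (lact ι (j.comp ι) b x) d = j b * Phi ι j x d := by
  induction x using tens_induction with
  | zero => simp only [map_zero, AddMonoidHom.zero_apply, mul_zero]
  | tm b' a => simp only [lact_tmul, Phi_tmul, map_mul, mul_assoc]
  | add x y hx hy => simp only [map_add, AddMonoidHom.add_apply, hx, hy, mul_add]

lemma Phi_ract (a : A) (x : Tens ι (j.comp ι)) (d : Subring.centralizer (Set.range (j.comp ι))) :
    Phi ι j (ract ι (j.comp ι) a x) d = Phi ι j x d * a := by
  induction x using tens_induction with
  | zero => simp only [map_zero, AddMonoidHom.zero_apply, zero_mul]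
  | tm b a' => simp only [ract_tmul, Phi_tmul, mul_assoc]
  | add x y hx hy => simp only [map_add, AddMonoidHom.add_apply, hx, hy, add_mul]

/-- `Φ x` is left `R`-linear, `R = A^B` being the centralizer of `B` in `A`. -/
lemma Phi_inclusion_mul
    (hRD : Subring.centralizer (Set.range j) ≤ Subring.centralizer (Set.range (j.comp ι)))
    (x : Tens ι (j.comp ι)) (r : Subring.centralizer (Set.range j))
    (d : Subring.centralizer (Set.range (j.comp ι))) :
    Phi ι j x (Subring.inclusion hRD r * d) = r * Phi ι j x d := by
  induction x using tens_induction with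
  | zero => simp only [map_zero, AddMonoidHom.zero_apply, mul_zero]
  | tm b a =>
    have hbr : j b * r = r * j b := Subring.mem_centralizer_iff.mp r.2 _ ⟨b, rfl⟩
    simp only [Phi_tmul, Subring.coe_mul, Subring.coe_inclusion, ← mul_assoc, hbr]
  | add x y hx hy => simp only [map_add, AddMonoidHom.add_apply, hx, hy, mul_add]

end Phi

/-- Left relative H-separability in terms of elements: `B`-central
`eₖ ∈ B ⊗_C A` and `dₖ ∈ D = A^C` with `1 ⊗ 1 = ∑ₖ eₖ dₖ`. -/
structure LeftRelHSepSystem {C B A : Type*} [Ring C] [Ring B] [Ring A]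
    (ι : C →+* B) (j : B →+* A) where
  n : ℕ
  e : Fin n → Tens ι (j.comp ι)
  d : Fin n → Subring.centralizer (Set.range (j.comp ι))
  lact_e : ∀ k (b : B), lact ι (j.comp ι) b (e k) = ract ι (j.comp ι) (j b) (e k)
  tmul_one_one : tmul ι (j.comp ι) 1 1 = ∑ k, ract ι (j.comp ι) (d k) (e k)

namespace LeftRelHSepSystem

variable {C B A : Type*} [Ring C] [Ring B] [Ring A] {ι : C →+* B} {j : B →+* A}
  (S : LeftRelHSepSystem ι j)

def inv (g : Subring.centralizer (Set.range (j.comp ι)) →+ A) : Tens ι (j.comp ι) :=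
  ∑ k, ract ι (j.comp ι) (g (S.d k)) (S.e k)

lemma inv_Phi (x : Tens ι (j.comp ι)) : S.inv (Phi ι j x) = x := by
  induction x using tens_induction with
  | zero => simp only [inv, map_zero, AddMonoidHom.zero_apply, ract_zero, Finset.sum_const_zero]
  | tm b a =>
    calc S.inv (Phi ι j (tmul ι (j.comp ι) b a))
        = ∑ k, ract ι (j.comp ι) a (ract ι (j.comp ι) (S.d k)
            (ract ι (j.comp ι) (j b) (S.e k))) := by
          simp only [inv, Phi_tmul, ract_ract, mul_assoc]
      _ = lact ι (j.comp ι) b (ract ι (j.comp ι) a (tmul ι (j.comp ι) 1 1)) := by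
          simp only [S.tmul_one_one, map_sum, lact_ract, S.lact_e]
      _ = tmul ι (j.comp ι) b a := by rw [ract_tmul, lact_tmul, mul_one, one_mul]
  | add x y hx hy =>
    simp only [inv, map_add, AddMonoidHom.add_apply, ract_add, Finset.sum_add_distrib] at hx hy ⊢
    rw [hx, hy]

lemma Phi_e_mem_centralizer (k : Fin S.n) (d : Subring.centralizer (Set.range (j.comp ι))) :
    Phi ι j (S.e k) d ∈ Subring.centralizer (Set.range j) := by
  rw [Subring.mem_centralizer_iff]
  rintro _ ⟨b, rfl⟩
  rw [← Phi_lact, S.lact_e, Phi_ract]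

lemma sum_Phi_e_mul_d (d : Subring.centralizer (Set.range (j.comp ι))) :
    ∑ k, Phi ι j (S.e k) d * S.d k = (d : A) := by
  have h := congrArg (fun x => Phi ι j x d) S.tmul_one_one
  simp only [Phi_tmul, map_one, one_mul, mul_one, map_sum, AddMonoidHom.finsetSum_apply,
    Phi_ract] at h
  exact h.symm

lemma Phi_inv
    (hRD : Subring.centralizer (Set.range j) ≤ Subring.centralizer (Set.range (j.comp ι)))
    (g : Subring.centralizer (Set.range (j.comp ι)) →+ A)
    (hg : ∀ (r : Subring.centralizer (Set.range j)) d,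
      g (Subring.inclusion hRD r * d) = r * g d) :
    Phi ι j (S.inv g) = g := by
  ext d
  have hd : d = ∑ k, Subring.inclusion hRD ⟨_, S.Phi_e_mem_centralizer k d⟩ * S.d k :=
    Subtype.ext (by push_cast; exact (S.sum_Phi_e_mul_d d).symm)
  conv_rhs => rw [hd, map_sum]
  simp only [inv, map_sum, AddMonoidHom.finsetSum_apply, Phi_ract, hg]

end LeftRelHSepSystem

lemma LeftRelHSep.nonempty_system {C B A : Type*} [Ring C] [Ring B] [Ring A]
    {ι : C →+* B} {j : B →+* A} {n : ℕ} (h : LeftRelHSep ι j n) :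
    Nonempty (LeftRelHSepSystem ι j) := by
  obtain ⟨i, p, hil, hir, hpl, hpr, hpi⟩ := h
  have hd : ∀ k, i (tmul ι (j.comp ι) 1 1) k ∈ Subring.centralizer (Set.range (j.comp ι)) := by
    intro k
    rw [Subring.mem_centralizer_iff]
    rintro _ ⟨c, rfl⟩
    have h1c : lact ι (j.comp ι) (ι c) (tmul ι (j.comp ι) 1 1)
        = ract ι (j.comp ι) (j.comp ι c) (tmul ι (j.comp ι) 1 1) := by
      simpa only [lact_tmul, ract_tmul, mul_one, one_mul] using tmul_rel ι (j.comp ι) 1 c 1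
    simpa only [h1c, hir, RingHom.comp_apply] using
      (congrFun (hil (ι c) (tmul ι (j.comp ι) 1 1)) k).symm
  have hsum : ∀ v : Fin n → A, ∑ k, ract ι (j.comp ι) (v k) (p (Pi.single k 1)) = p v := by
    intro v
    calc ∑ k, ract ι (j.comp ι) (v k) (p (Pi.single k 1))
        = ∑ k, p (Pi.single k (v k)) := by
          refine Finset.sum_congr rfl fun k _ => ?_
          rw [← hpr]
          congr 1
          funext m
          simp only [Pi.single_apply]
          split_ifs <;> simp
      _ = p v := by rw [← map_sum, Finset.univ_sum_single]
  refine ⟨⟨n, fun k => p (Pi.single k 1), fun k => ⟨_, hd k⟩, fun k b => ?_, ?_⟩⟩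
  · rw [← hpl, ← hpr]
    congr 1
    funext m
    simp only [Pi.single_apply]
    split_ifs <;> simp
  · exact ((hsum _).trans (hpi _)).symm

theorem tens_iso_homRD_general
    {C B A : Type*} [Ring C] [Ring B] [Ring A]
    (ι : C →+* B) (j : B →+* A)
    (hRD : Subring.centralizer (Set.range j) ≤ Subring.centralizer (Set.range (j.comp ι)))
    (hH : ∃ n, LeftRelHSep ι j n) :
    Function.Injective (Phi ι j) ∧
    (∀ x (r : ↥(Subring.centralizer (Set.range j)))
        (d : ↥(Subring.centralizer (Set.range (j.comp ι)))),
      Phi ι j x (Subring.inclusion hRD r * d) = (r : A) * Phi ι j x d) ∧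
    (∀ g : ↥(Subring.centralizer (Set.range (j.comp ι))) →+ A,
      (∀ (r : ↥(Subring.centralizer (Set.range j)))
          (d : ↥(Subring.centralizer (Set.range (j.comp ι)))),
        g (Subring.inclusion hRD r * d) = (r : A) * g d) →
      ∃ x, Phi ι j x = g) ∧
    (∀ (b : B) x d, Phi ι j (lact ι (j.comp ι) b x) d = j b * Phi ι j x d) ∧
    (∀ (a : A) x d, Phi ι j (ract ι (j.comp ι) a x) d = Phi ι j x d * a) := by
  obtain ⟨n, hH⟩ := hH
  obtain ⟨S⟩ := hH.nonempty_system
  exact ⟨Function.LeftInverse.injective S.inv_Phi, Phi_inclusion_mul ι j hRD,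
    fun g hg => ⟨S.inv g, S.Phi_inv hRD g hg⟩, Phi_lact ι j, Phi_ract ι j⟩

/-- in a left relative H-separable tower `A ⊇ B ⊇ C`, the map
`B ⊗_C A → Hom(_R D, _R A)`, `b ⊗ a ↦ (d ↦ b d a)`, is an isomorphism of
`B`-`A`-bimodules onto the left `R`-linear maps `D → A`. -/
theorem tens_iso_homRD
    {C B A : Type*} [Ring C] [Ring B] [Ring A]
    (ι : C →+* B) (j : B →+* A)
    (hι : Function.Injective ι) (hj : Function.Injective j)
    (hRD : Subring.centralizer (Set.range j) ≤ Subring.centralizer (Set.range (j.comp ι)))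
    (hH : ∃ n, LeftRelHSep ι j n) :
    Function.Injective (Phi ι j) ∧
    (∀ x (r : ↥(Subring.centralizer (Set.range j)))
        (d : ↥(Subring.centralizer (Set.range (j.comp ι)))),
      Phi ι j x (Subring.inclusion hRD r * d) = (r : A) * Phi ι j x d) ∧
    (∀ g : ↥(Subring.centralizer (Set.range (j.comp ι))) →+ A,
      (∀ (r : ↥(Subring.centralizer (Set.range j)))
          (d : ↥(Subring.centralizer (Set.range (j.comp ι)))),
        g (Subring.inclusion hRD r * d) = (r : A) * g d) →
      ∃ x, Phi ι j x = g) ∧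
    (∀ (b : B) x d, Phi ι j (lact ι (j.comp ι) b x) d = j b * Phi ι j x d) ∧
    (∀ (a : A) x d, Phi ι j (ract ι (j.comp ι) a x) d = Phi ι j x d * a) :=
  tens_iso_homRD_general ι j hRD hH

end
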